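/- arXiv:1806.06651 — 3 statements merged into one kernel-verified Lean document; each statement's English description precedes it below -/
import Mathlib

section
/- Let N be a positive integer, let a_ij ≥ 0 for 1 ≤ i, j ≤ N, let β > 0 and α ∈ (0,1), and suppose β(1−α)·Σ_{j=1}^N a_ij > 1 for every i. Let φ_1, …, φ_N be real numbers with 1−α ≤ φ_i ≤ 1 for all i. Then there exist ρ_1, …, ρ_N ∈ (0,1) satisfying the endemic equilibrium equations ρ_i = β φ_i (1 − ρ_i) Σ_{j=1}^N a_ij ρ_j for every i = 1, …, N. -/
/-- The map `t ↦ t/(1+t)` is monotone on the nonnegative reals. -/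
lemma stmt_4_gmono {s t : ℝ} (hs : 0 ≤ s) (hst : s ≤ t) :
    s / (1 + s) ≤ t / (1 + t) := by
  have h1 : (0:ℝ) < 1 + s := by linarith
  have h2 : (0:ℝ) < 1 + t := by linarith
  rw [div_le_div_iff₀ h1 h2]
  nlinarith

/-- Existence of an endemic equilibrium (algebraic form of the paper's Theorem 1):
if `β(1-α)·Σ_j a_ij > 1` for every `i` and `1-α ≤ φ_i ≤ 1`, then there exist
`ρ_i ∈ (0,1)` with `ρ_i = β φ_i (1-ρ_i) Σ_j a_ij ρ_j` for all `i`. -/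
theorem stmt_4 (N : ℕ) (hN : 0 < N) (a : Fin N → Fin N → ℝ)
    (ha : ∀ i j, 0 ≤ a i j)
    (β α : ℝ) (hβ : 0 < β) (hα : α ∈ Set.Ioo (0 : ℝ) 1)
    (hthr : ∀ i, 1 < β * (1 - α) * ∑ j, a i j)
    (φ : Fin N → ℝ) (hφ : ∀ i, 1 - α ≤ φ i ∧ φ i ≤ 1) :
    ∃ ρ : Fin N → ℝ, ∀ i,
      ρ i ∈ Set.Ioo (0 : ℝ) 1 ∧
      ρ i = β * φ i * (1 - ρ i) * ∑ j, a i j * ρ j := by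
  haveI : Nonempty (Fin N) := ⟨⟨0, hN⟩⟩
  obtain ⟨hα0, hα1⟩ := hα
  have hφpos : ∀ i, 0 < φ i := fun i => lt_of_lt_of_le (by linarith) (hφ i).1
  -- row sums
  set A : Fin N → ℝ := fun i => ∑ j, a i j with hA
  have hApos : ∀ i, 0 < A i := by
    intro i
    by_contra h
    push_neg at h
    have hAi : (∑ j, a i j) ≤ 0 := h
    have hb : 0 ≤ β * (1 - α) := by nlinarith
    have hnp : β * (1 - α) * (∑ j, a i j) ≤ 0 :=
      mul_nonpos_of_nonneg_of_nonpos hb hAi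
    have := hthr i
    linarith
  -- r i = β φ_i A_i > 1
  set r : Fin N → ℝ := fun i => β * φ i * A i with hr
  have hr1 : ∀ i, 1 < r i := by
    intro i
    have h1 := hthr i
    have h2 := (hφ i).1
    have h3 := hApos i
    have : β * (1 - α) * A i ≤ β * φ i * A i := by nlinarith
    simp only [hr]
    linarith
  have hrpos : ∀ i, 0 < r i := fun i => lt_trans one_pos (hr1 i)
  -- choose c
  set c : ℝ := Finset.univ.inf' Finset.univ_nonempty (fun i => 1 - 1 / r i) with hc
  have hcpos : 0 < c := by
    rw [hc, Finset.lt_inf'_iff]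
    intro i _
    have h1 := hr1 i
    have : 1 / r i < 1 := by
      rw [div_lt_one (hrpos i)]; exact h1
    linarith
  have hc_le : ∀ i, c ≤ 1 - 1 / r i := by
    intro i
    exact Finset.inf'_le _ (Finset.mem_univ i)
  have hc1 : c < 1 := by
    obtain ⟨i⟩ := (inferInstance : Nonempty (Fin N))
    have := hc_le i
    have h2 : 0 < 1 / r i := one_div_pos.mpr (hrpos i)
    linarith
  have hkey : ∀ i, 1 ≤ r i * (1 - c) := by
    intro i
    have h1 := hc_le i
    have h2 : 1 / r i ≤ 1 - c := by linarith
    calc (1:ℝ) = r i * (1 / r i) := (mul_one_div_cancel (hrpos i).ne').symm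
    _ ≤ r i * (1 - c) := by
        exact mul_le_mul_of_nonneg_left h2 (hrpos i).le
  -- the box
  set lo : Fin N → ℝ := fun _ => c with hlo
  set hi : Fin N → ℝ := fun _ => (1:ℝ) with hhi
  haveI : Fact (lo ≤ hi) := ⟨fun i => by simp only [hlo, hhi]; linarith⟩
  -- the map
  have tdef : ∀ (x : Fin N → ℝ) (i : Fin N),
      (∀ j, c ≤ x j) → c * r i ≤ β * φ i * ∑ j, a i j * x j := by
    intro x i hx
    have hsum : c * A i ≤ ∑ j, a i j * x j := by
      rw [hA]
      rw [Finset.mul_sum]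
      apply Finset.sum_le_sum
      intro j _
      calc c * a i j = a i j * c := by ring
      _ ≤ a i j * x j := mul_le_mul_of_nonneg_left (hx j) (ha i j)
    calc c * r i = β * φ i * (c * A i) := by rw [hr]; ring
    _ ≤ β * φ i * ∑ j, a i j * x j := by
        exact mul_le_mul_of_nonneg_left hsum (mul_pos hβ (hφpos i)).le
  have hmem : ∀ x : Set.Icc lo hi, ∀ i,
      (fun i => (β * φ i * ∑ j, a i j * (x : Fin N → ℝ) j) /
        (1 + β * φ i * ∑ j, a i j * (x : Fin N → ℝ) j)) i ∈ Set.Icc c 1 := by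
    intro x i
    obtain ⟨hx1, hx2⟩ := x.2
    have hxlo : ∀ j, c ≤ (x : Fin N → ℝ) j := fun j => hx1 j
    set t : ℝ := β * φ i * ∑ j, a i j * (x : Fin N → ℝ) j with ht
    have htcr : c * r i ≤ t := tdef _ i hxlo
    have htpos : 0 < t := lt_of_lt_of_le (mul_pos hcpos (hrpos i)) htcr
    have h1t : (0:ℝ) < 1 + t := by linarith
    constructor
    · rw [le_div_iff₀ h1t]
      have h1 := hkey i
      have h2 := hrpos i
      nlinarith
    · rw [div_le_one h1t]
      linarith
  let F : Set.Icc lo hi →o Set.Icc lo hi :=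
    { toFun := fun x => ⟨fun i => (β * φ i * ∑ j, a i j * (x : Fin N → ℝ) j) /
        (1 + β * φ i * ∑ j, a i j * (x : Fin N → ℝ) j),
        fun i => (hmem x i).1, fun i => (hmem x i).2⟩
      monotone' := by
        intro x y hxy
        intro i
        simp only
        have hxlo : ∀ j, c ≤ (x : Fin N → ℝ) j := fun j => x.2.1 j
        have hxy' : ∀ j, (x : Fin N → ℝ) j ≤ (y : Fin N → ℝ) j := fun j => hxy j
        have hts : β * φ i * ∑ j, a i j * (x : Fin N → ℝ) j ≤
            β * φ i * ∑ j, a i j * (y : Fin N → ℝ) j := by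
          apply mul_le_mul_of_nonneg_left _ (mul_pos hβ (hφpos i)).le
          apply Finset.sum_le_sum
          intro j _
          exact mul_le_mul_of_nonneg_left (hxy' j) (ha i j)
        have htpos : 0 ≤ β * φ i * ∑ j, a i j * (x : Fin N → ℝ) j := by
          have h1 := tdef _ i hxlo
          have h2 : 0 < c * r i := mul_pos hcpos (hrpos i)
          linarith
        exact stmt_4_gmono htpos hts }
  -- Knaster–Tarski fixed point
  set ρhat := F.lfp with hρhat
  have hfix : F ρhat = ρhat := F.map_lfp
  set ρ : Fin N → ℝ := (ρhat : Fin N → ℝ) with hρ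
  refine ⟨ρ, fun i => ?_⟩
  have hρlo : ∀ j, c ≤ ρ j := fun j => ρhat.2.1 j
  have hfixi : (β * φ i * ∑ j, a i j * ρ j) /
      (1 + β * φ i * ∑ j, a i j * ρ j) = ρ i := by
    have h := congrFun (congrArg Subtype.val hfix) i
    exact h
  set S : ℝ := ∑ j, a i j * ρ j with hS
  have htcr : c * r i ≤ β * φ i * S := tdef ρ i hρlo
  have htpos : 0 < β * φ i * S := lt_of_lt_of_le (mul_pos hcpos (hrpos i)) htcr
  have h1t : (0:ℝ) < 1 + β * φ i * S := by linarith
  have heq : ρ i * (1 + β * φ i * S) = β * φ i * S := by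
    rw [← hfixi]
    field_simp
  constructor
  · constructor
    · exact lt_of_lt_of_le hcpos (hρlo i)
    · rw [← hfixi]
      rw [div_lt_one h1t]
      linarith
  · linear_combination heq
end

section
/- Let N be a positive integer, let A = (a_ij) be a nonnegative real N×N matrix, let σ ≥ 0 and let ω ∈ ℝ^N be a nonnegative vector with Σ_{i=1}^N ω_i a_ij = σ ω_j for all j. Let λ > 0 and α ∈ (0,1) satisfy λ(1+α)σ < 1. Suppose ρ : ℝ → ℝ^N and φ : ℝ → ℝ^N are such that for all t ≥ 0 and all i: 0 ≤ ρ_i(t) ≤ 1, 0 ≤ φ_i(t) ≤ 1, and ρ_i is differentiable at t with ρ_i′(t) = −ρ_i(t) + λ φ_i(t)(1−ρ_i(t)) Σ_{j=1}^N a_ij ρ_j(t). Then for all t ≥ 0, Σ_{i=1}^N ω_i ρ_i(t) ≤ (Σ_{i=1}^N ω_i ρ_i(0)) · exp((λ(1+α)σ − 1)t). -/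
/-!
The weighted prevalence `V = ω ⬝ᵥ ρ` is a linear Lyapunov function. Since `φ_i (1 - ρ_i) ∈ [0, 1]`
and `Aρ ≥ 0`, the SIS vector field is bounded componentwise by `λ Aρ - ρ`, and pairing with the
left eigenvector `ω` turns this into `V' ≤ (λσ - 1) V ≤ (λ(1+α)σ - 1) V`. Grönwall's inequality
then gives the exponential bound.
-/

open Matrix Set

theorem le_mul_exp_of_hasDerivAt_le_mul {f f' : ℝ → ℝ} {c : ℝ}
    (hf : ∀ t, 0 ≤ t → HasDerivAt f (f' t) t) (hbound : ∀ t, 0 ≤ t → f' t ≤ c * f t) :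
    ∀ t, 0 ≤ t → f t ≤ f 0 * Real.exp (c * t) := by
  intro t ht
  have h := le_gronwallBound_of_liminf_deriv_right_le (f := f) (δ := f 0) (ε := 0) (b := t)
    (fun s hs => (hf s hs.1).continuousAt.continuousWithinAt)
    (fun s hs _ hr => (hf s hs.1).hasDerivWithinAt.liminf_right_slope_le hr) le_rfl
    (fun s hs => by simpa using hbound s hs.1) t ⟨ht, le_rfl⟩
  rwa [gronwallBound_ε0, sub_zero] at h

section SIS

variable {ι : Type*} [Fintype ι]

theorem HasDerivAt.const_dotProduct (ω : ι → ℝ) {f : ℝ → ι → ℝ} {f' : ι → ℝ} {t : ℝ}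
    (hf : ∀ i, HasDerivAt (fun s => f s i) (f' i) t) :
    HasDerivAt (fun s => ω ⬝ᵥ f s) (ω ⬝ᵥ f') t :=
  HasDerivAt.fun_sum fun i _ => (hf i).const_mul (ω i)

theorem dotProduct_mulVec_of_vecMul_eq_smul {A : Matrix ι ι ℝ} {ω : ι → ℝ} {σ : ℝ}
    (heig : ω ᵥ* A = σ • ω) (x : ι → ℝ) : ω ⬝ᵥ (A *ᵥ x) = σ * (ω ⬝ᵥ x) := by
  rw [dotProduct_mulVec, heig, smul_dotProduct, smul_eq_mul]

def sisField (A : Matrix ι ι ℝ) (lam : ℝ) (φ x : ι → ℝ) : ι → ℝ :=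
  fun i => -x i + lam * φ i * (1 - x i) * (A *ᵥ x) i

theorem sisField_le {A : Matrix ι ι ℝ} {lam : ℝ} {φ x : ι → ℝ} (hA : ∀ i j, 0 ≤ A i j)
    (hlam : 0 ≤ lam) (hφ : ∀ i, φ i ∈ Icc 0 1) (hx : ∀ i, x i ∈ Icc 0 1) :
    sisField A lam φ x ≤ lam • (A *ᵥ x) - x := by
  intro i
  have hAx : 0 ≤ (A *ᵥ x) i := dotProduct_nonneg_of_nonneg (hA i) fun j => (hx j).1
  have hinhib : φ i * (1 - x i) ≤ 1 :=
    mul_le_one₀ (hφ i).2 (sub_nonneg.2 (hx i).2) (by linarith [(hx i).1])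
  calc sisField A lam φ x i = lam * (A *ᵥ x) i * (φ i * (1 - x i)) - x i := by
        simp only [sisField]; ring
    _ ≤ lam * (A *ᵥ x) i - x i :=
        sub_le_sub_right (mul_le_of_le_one_right (mul_nonneg hlam hAx) hinhib) _

theorem dotProduct_sisField_le {A : Matrix ι ι ℝ} {lam σ : ℝ} {ω φ x : ι → ℝ}
    (hA : ∀ i j, 0 ≤ A i j) (hlam : 0 ≤ lam) (hω : 0 ≤ ω) (heig : ω ᵥ* A = σ • ω)
    (hφ : ∀ i, φ i ∈ Icc 0 1) (hx : ∀ i, x i ∈ Icc 0 1) :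
    ω ⬝ᵥ sisField A lam φ x ≤ (lam * σ - 1) * (ω ⬝ᵥ x) :=
  calc ω ⬝ᵥ sisField A lam φ x ≤ ω ⬝ᵥ (lam • (A *ᵥ x) - x) :=
        dotProduct_le_dotProduct_of_nonneg_left (sisField_le hA hlam hφ hx) hω
    _ = (lam * σ - 1) * (ω ⬝ᵥ x) := by
        rw [dotProduct_sub, dotProduct_smul, dotProduct_mulVec_of_vecMul_eq_smul heig, smul_eq_mul]
        ring

end SIS

theorem stmt_8_general (N : ℕ) (A : Fin N → Fin N → ℝ)
    (hA : ∀ i j, 0 ≤ A i j)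
    (σ : ℝ) (hσ : 0 ≤ σ)
    (ω : Fin N → ℝ) (hω : ∀ i, 0 ≤ ω i)
    (heig : ∀ j, ∑ i, ω i * A i j = σ * ω j)
    (lam α : ℝ) (hlam : 0 < lam) (hα : α ∈ Set.Ioo (0 : ℝ) 1)
    (ρ φ : ℝ → Fin N → ℝ)
    (hρ : ∀ t : ℝ, 0 ≤ t → ∀ i, ρ t i ∈ Set.Icc (0 : ℝ) 1)
    (hφ : ∀ t : ℝ, 0 ≤ t → ∀ i, φ t i ∈ Set.Icc (0 : ℝ) 1)
    (hode : ∀ t : ℝ, 0 ≤ t → ∀ i,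
      HasDerivAt (fun s => ρ s i)
        (-(ρ t i) + lam * φ t i * (1 - ρ t i) * ∑ j, A i j * ρ t j) t) :
    ∀ t : ℝ, 0 ≤ t →
      ∑ i, ω i * ρ t i ≤
        (∑ i, ω i * ρ 0 i) * Real.exp ((lam * (1 + α) * σ - 1) * t) := by
  have hheig : ω ᵥ* A = σ • ω := funext heig
  have hσα : lam * σ ≤ lam * (1 + α) * σ := by
    linarith [mul_nonneg (mul_nonneg hlam.le hα.1.le) hσ]
  refine le_mul_exp_of_hasDerivAt_le_mul (f := fun t => ω ⬝ᵥ ρ t)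
    (fun t ht => HasDerivAt.const_dotProduct ω (f' := sisField A lam (φ t) (ρ t)) (hode t ht))
    fun t ht => ?_
  calc ω ⬝ᵥ sisField A lam (φ t) (ρ t) ≤ (lam * σ - 1) * (ω ⬝ᵥ ρ t) :=
        dotProduct_sisField_le hA hlam.le hω hheig (hφ t ht) (hρ t ht)
    _ ≤ (lam * (1 + α) * σ - 1) * (ω ⬝ᵥ ρ t) := by
        gcongr
        exact dotProduct_nonneg_of_nonneg hω fun i => (hρ t ht i).1

/-- Quantitative decay of the Lyapunov function `V(t) = Σ_i ω_i ρ_i(t)` for the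
quenched mean-field SIS system below the threshold `λ(1+α)σ < 1`:
`V(t) ≤ V(0) · exp((λ(1+α)σ − 1) t)` for all `t ≥ 0`. -/
theorem stmt_8 (N : ℕ) (hN : 0 < N) (A : Fin N → Fin N → ℝ)
    (hA : ∀ i j, 0 ≤ A i j)
    (σ : ℝ) (hσ : 0 ≤ σ)
    (ω : Fin N → ℝ) (hω : ∀ i, 0 ≤ ω i)
    (heig : ∀ j, ∑ i, ω i * A i j = σ * ω j)
    (lam α : ℝ) (hlam : 0 < lam) (hα : α ∈ Set.Ioo (0 : ℝ) 1)
    (hthr : lam * (1 + α) * σ < 1)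
    (ρ φ : ℝ → Fin N → ℝ)
    (hρ : ∀ t : ℝ, 0 ≤ t → ∀ i, ρ t i ∈ Set.Icc (0 : ℝ) 1)
    (hφ : ∀ t : ℝ, 0 ≤ t → ∀ i, φ t i ∈ Set.Icc (0 : ℝ) 1)
    (hode : ∀ t : ℝ, 0 ≤ t → ∀ i,
      HasDerivAt (fun s => ρ s i)
        (-(ρ t i) + lam * φ t i * (1 - ρ t i) * ∑ j, A i j * ρ t j) t) :
    ∀ t : ℝ, 0 ≤ t →
      ∑ i, ω i * ρ t i ≤
        (∑ i, ω i * ρ 0 i) * Real.exp ((lam * (1 + α) * σ - 1) * t) :=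
  stmt_8_general N A hA σ hσ ω hω heig lam α hlam hα ρ φ hρ hφ hode
end

section
/- Let s, s*, r, r*, q, q* be positive real numbers. Then 2 − s*/s + q/q* − r/r* − (r* · s · q)/(r · s* · q*) ≤ (−r/r* + ln(r/r*)) − (−q/q* + ln(q/q*)), with equality if and only if s = s* and r* · s · q = r · s* · q*. -/
/-!
Put `a = s*/s` and `b = r* s q / (r s* q*)`. Since `a b = (q/q*) / (r/r*)`, the logarithms recombine
and the right-hand side minus the left-hand side equals `(a - 1 - ln a) + (b - 1 - ln b)`.
Both summands are nonnegative by `ln x ≤ x - 1`, with equality only at `x = 1`; so the gap is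
nonnegative and vanishes exactly when `a = b = 1`.
-/

open Real

lemma sub_one_sub_log_nonneg {x : ℝ} (hx : 0 < x) : 0 ≤ x - 1 - log x := by
  linarith [log_le_sub_one_of_pos hx]

lemma sub_one_sub_log_eq_zero_iff {x : ℝ} (hx : 0 < x) : x - 1 - log x = 0 ↔ x = 1 := by
  refine ⟨fun h => ?_, fun h => by simp [h]⟩
  by_contra hne
  linarith [log_lt_sub_one_of_pos hx hne]

lemma log_ratio_gap_eq {s sstar r rstar q qstar : ℝ}
    (hs : 0 < s) (hsstar : 0 < sstar) (hr : 0 < r) (hrstar : 0 < rstar)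
    (hq : 0 < q) (hqstar : 0 < qstar) :
    (-(r / rstar) + log (r / rstar)) - (-(q / qstar) + log (q / qstar)) -
        (2 - sstar / s + q / qstar - r / rstar - (rstar * s * q) / (r * sstar * qstar)) =
      (sstar / s - 1 - log (sstar / s)) +
        ((rstar * s * q) / (r * sstar * qstar) - 1 - log ((rstar * s * q) / (r * sstar * qstar))) := by
  have hprod : sstar / s * ((rstar * s * q) / (r * sstar * qstar)) = (q / qstar) / (r / rstar) := by
    field_simp
  have hlog : log (sstar / s) + log ((rstar * s * q) / (r * sstar * qstar)) =
      log (q / qstar) - log (r / rstar) := by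
    rw [← log_mul (by positivity) (by positivity), hprod, log_div (by positivity) (by positivity)]
  linarith

/-- The key estimate `F_ij ≤ G_i(ρ_i) − G_j(ρ_j)` in the proof of Theorem 3, with the
equality case: for positive reals,
`2 - s*/s + q/q* - r/r* - (r* s q)/(r s* q*) ≤ (-r/r* + ln(r/r*)) - (-q/q* + ln(q/q*))`,
with equality iff `s = s*` and `r* s q = r s* q*`. -/
theorem stmt_12 (s sstar r rstar q qstar : ℝ)
    (hs : 0 < s) (hsstar : 0 < sstar) (hr : 0 < r) (hrstar : 0 < rstar)
    (hq : 0 < q) (hqstar : 0 < qstar) :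
    (2 - sstar / s + q / qstar - r / rstar - (rstar * s * q) / (r * sstar * qstar) ≤
      (-(r / rstar) + Real.log (r / rstar)) - (-(q / qstar) + Real.log (q / qstar))) ∧
    (2 - sstar / s + q / qstar - r / rstar - (rstar * s * q) / (r * sstar * qstar) =
        (-(r / rstar) + Real.log (r / rstar)) - (-(q / qstar) + Real.log (q / qstar)) ↔
      s = sstar ∧ rstar * s * q = r * sstar * qstar) := by
  have hgap := log_ratio_gap_eq hs hsstar hr hrstar hq hqstar
  have ha : 0 < sstar / s := by positivity
  have hb : 0 < (rstar * s * q) / (r * sstar * qstar) := by positivity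
  have hna := sub_one_sub_log_nonneg ha
  have hnb := sub_one_sub_log_nonneg hb
  refine ⟨by linarith, ?_⟩
  rw [eq_comm, ← sub_eq_zero, hgap, add_eq_zero_iff_of_nonneg hna hnb,
    sub_one_sub_log_eq_zero_iff ha, sub_one_sub_log_eq_zero_iff hb,
    div_eq_one_iff_eq hs.ne', div_eq_one_iff_eq (by positivity), eq_comm]
end
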